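/- arXiv:2404.13815 — 3 statements merged into one kernel-verified Lean document; each statement's English description precedes it below -/
import Mathlib

section
/- Let (Y, Ŷ) be a pair of discrete random variables on a common finite alphabet with strictly positive joint probability mass function r. Then the mutual information is bounded below by the entropy of Y minus the cross-entropy between the marginal of Y and the marginal of Ŷ: I(Y;Ŷ) ≥ H(Y) − H(Y,Ŷ), i.e. Σ_{(y,ŷ)} r(y,ŷ)·log( r(y,ŷ) / (r₁(y)·r₂(ŷ)) ) ≥ ( −Σ_y r₁(y)·log r₁(y) ) − ( −Σ_y r₁(y)·log r₂(y) ). -/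
lemma kl_nonneg' {α : Type*} [Fintype α] (p q : α → ℝ)
    (hp : ∀ x, 0 < p x) (hq : ∀ x, 0 < q x)
    (hpq : ∑ x, q x ≤ ∑ x, p x) :
    0 ≤ ∑ x, p x * Real.log (p x / q x) := by
  have key : ∀ x, p x - q x ≤ p x * Real.log (p x / q x) := by
    intro x
    have h1 : Real.log (q x / p x) ≤ q x / p x - 1 :=
      Real.log_le_sub_one_of_pos (div_pos (hq x) (hp x))
    have h2 : Real.log (p x / q x) = - Real.log (q x / p x) := by
      rw [← Real.log_inv, inv_div]
    nlinarith [(hp x), (hq x), mul_le_mul_of_nonneg_left h1 (hp x).le,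
      mul_div_cancel₀ (q x) (hp x).ne']
  calc (0:ℝ) ≤ ∑ x, (p x - q x) := by
        rw [Finset.sum_sub_distrib]; linarith
    _ ≤ _ := Finset.sum_le_sum fun x _ => key x

/-- For a strictly positive joint pmf `r` on `𝒴 × 𝒴`,
the mutual information `I(Y;Ŷ)` is bounded below by `H(Y) - H(Y,Ŷ)`,
where `H(Y,Ŷ)` is the cross-entropy between the two marginals. -/
theorem mutual_information_ge_entropy_sub_crossEntropy
    {𝒴 : Type*} [Fintype 𝒴] [Nonempty 𝒴]
    (r : 𝒴 × 𝒴 → ℝ) (hr : ∀ x, 0 < r x)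
    (hsum : ∑ x : 𝒴 × 𝒴, r x = 1) :
    ∑ x : 𝒴 × 𝒴, r x *
        Real.log (r x / ((∑ yh, r (x.1, yh)) * (∑ y, r (y, x.2))))
      ≥ (-∑ y, (∑ yh, r (y, yh)) * Real.log (∑ yh, r (y, yh)))
        - (-∑ y, (∑ yh, r (y, yh)) * Real.log (∑ y', r (y', y))) := by
  set r1 : 𝒴 → ℝ := fun y => ∑ yh, r (y, yh) with hr1
  set r2 : 𝒴 → ℝ := fun yh => ∑ y, r (y, yh) with hr2
  have hr1pos : ∀ y, 0 < r1 y := fun y =>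
    Finset.sum_pos (fun i _ => hr _) Finset.univ_nonempty
  have hr2pos : ∀ y, 0 < r2 y := fun y =>
    Finset.sum_pos (fun i _ => hr _) Finset.univ_nonempty
  have hs1 : ∑ y, r1 y = 1 := by
    rw [← hsum, Fintype.sum_prod_type]
  have hs2 : ∑ y, r2 y = 1 := by
    rw [← hsum, Fintype.sum_prod_type]
    exact Finset.sum_comm
  -- LHS ≥ 0
  have hL : 0 ≤ ∑ x : 𝒴 × 𝒴, r x * Real.log (r x / (r1 x.1 * r2 x.2)) := by
    apply kl_nonneg' r (fun x => r1 x.1 * r2 x.2) hr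
      (fun x => mul_pos (hr1pos _) (hr2pos _))
    have : ∑ x : 𝒴 × 𝒴, r1 x.1 * r2 x.2 = 1 := by
      rw [Fintype.sum_prod_type]
      simp only [← Finset.mul_sum, hs2, mul_one, hs1]
    rw [this, hsum]
  -- RHS ≤ 0
  have hR : (-∑ y, r1 y * Real.log (r1 y)) - (-∑ y, r1 y * Real.log (r2 y)) ≤ 0 := by
    have hkl : 0 ≤ ∑ y, r1 y * Real.log (r1 y / r2 y) :=
      kl_nonneg' r1 r2 hr1pos hr2pos (by rw [hs1, hs2])
    have : ∑ y, r1 y * Real.log (r1 y / r2 y)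
        = ∑ y, (r1 y * Real.log (r1 y) - r1 y * Real.log (r2 y)) := by
      apply Finset.sum_congr rfl
      intro y _
      rw [Real.log_div (hr1pos y).ne' (hr2pos y).ne']
      ring
    rw [this, Finset.sum_sub_distrib] at hkl
    linarith
  linarith
end

section
/- Let p and q be strictly positive joint probability mass functions on the finite product 𝒴 × 𝒮 × 𝒵 such that, under both p and q, the label Y and the spurious-attribute label S are conditionally independent given the representation Z, i.e. p(y,s,z)·p_Z(z) = p_{YZ}(y,z)·p_{SZ}(s,z) and q(y,s,z)·q_Z(z) = q_{YZ}(y,z)·q_{SZ}(s,z) for all (y,s,z). Then the conditional Kullback–Leibler divergence of (Y,Z) given S decomposes as the conditional KL of Y given Z plus the conditional KL of Z given S: Σ_{(y,s,z)} p(y,s,z)·log( (p(y,s,z)·q_S(s)) / (p_S(s)·q(y,s,z)) ) = Σ_{(y,z)} p_{YZ}(y,z)·log( (p_{YZ}(y,z)·q_Z(z)) / (p_Z(z)·q_{YZ}(y,z)) ) + Σ_{(s,z)} p_{SZ}(s,z)·log( (p_{SZ}(s,z)·q_S(s)) / (p_S(s)·q_{SZ}(s,z)) ). -/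
/-- The `S`-marginal of a joint pmf on `𝒴 × 𝒮 × 𝒵`. -/
noncomputable def margS {𝒴 𝒮 𝒵 : Type*} [Fintype 𝒴] [Fintype 𝒵]
    (p : 𝒴 × 𝒮 × 𝒵 → ℝ) (s : 𝒮) : ℝ :=
  ∑ y, ∑ z, p (y, s, z)

/-- The `(Y,S)`-marginal of a joint pmf on `𝒴 × 𝒮 × 𝒵`. -/
noncomputable def margYS {𝒴 𝒮 𝒵 : Type*} [Fintype 𝒵]
    (p : 𝒴 × 𝒮 × 𝒵 → ℝ) (y : 𝒴) (s : 𝒮) : ℝ :=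
  ∑ z, p (y, s, z)

/-- The `(S,Z)`-marginal of a joint pmf on `𝒴 × 𝒮 × 𝒵`. -/
noncomputable def margSZ {𝒴 𝒮 𝒵 : Type*} [Fintype 𝒴]
    (p : 𝒴 × 𝒮 × 𝒵 → ℝ) (s : 𝒮) (z : 𝒵) : ℝ :=
  ∑ y, p (y, s, z)

/-- The `Z`-marginal of a joint pmf on `𝒴 × 𝒮 × 𝒵`. -/
noncomputable def margZ {𝒴 𝒮 𝒵 : Type*} [Fintype 𝒴] [Fintype 𝒮]
    (p : 𝒴 × 𝒮 × 𝒵 → ℝ) (z : 𝒵) : ℝ :=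
  ∑ y, ∑ s, p (y, s, z)

/-- The `(Y,Z)`-marginal of a joint pmf on `𝒴 × 𝒮 × 𝒵`. -/
noncomputable def margYZ {𝒴 𝒮 𝒵 : Type*} [Fintype 𝒮]
    (p : 𝒴 × 𝒮 × 𝒵 → ℝ) (y : 𝒴) (z : 𝒵) : ℝ :=
  ∑ s, p (y, s, z)

/-- If `Y ⟂ S | Z` under both `p` and `q`, then
`KL_cond((Y,Z)|S) = KL_cond(Y|Z) + KL_cond(Z|S)`. -/
theorem condKL_YZ_given_S_eq_condKL_Y_given_Z_add_condKL_Z_given_S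
    {𝒴 𝒮 𝒵 : Type*} [Fintype 𝒴] [Fintype 𝒮] [Fintype 𝒵]
    [Nonempty 𝒴] [Nonempty 𝒮] [Nonempty 𝒵]
    (p q : 𝒴 × 𝒮 × 𝒵 → ℝ) (hp : ∀ x, 0 < p x) (hq : ∀ x, 0 < q x)
    (hpsum : ∑ x : 𝒴 × 𝒮 × 𝒵, p x = 1) (hqsum : ∑ x : 𝒴 × 𝒮 × 𝒵, q x = 1)
    (hpind : ∀ y s z, p (y, s, z) * margZ p z = margYZ p y z * margSZ p s z)
    (hqind : ∀ y s z, q (y, s, z) * margZ q z = margYZ q y z * margSZ q s z) :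
    ∑ x : 𝒴 × 𝒮 × 𝒵,
        p x * Real.log ((p x * margS q x.2.1) / (margS p x.2.1 * q x))
      = (∑ y, ∑ z, margYZ p y z *
            Real.log ((margYZ p y z * margZ q z) / (margZ p z * margYZ q y z)))
        + ∑ s, ∑ z, margSZ p s z *
            Real.log ((margSZ p s z * margS q s) / (margS p s * margSZ q s z)) := by

  classical
  have hne : (Finset.univ : Finset 𝒴).Nonempty := Finset.univ_nonempty
  have hpS : ∀ s, 0 < margS p s := fun s =>
    Finset.sum_pos (fun y _ => Finset.sum_pos (fun z _ => hp _) Finset.univ_nonempty)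
      Finset.univ_nonempty
  have hqS : ∀ s, 0 < margS q s := fun s =>
    Finset.sum_pos (fun y _ => Finset.sum_pos (fun z _ => hq _) Finset.univ_nonempty)
      Finset.univ_nonempty
  have hpZ : ∀ z, 0 < margZ p z := fun z =>
    Finset.sum_pos (fun y _ => Finset.sum_pos (fun s _ => hp _) Finset.univ_nonempty)
      Finset.univ_nonempty
  have hqZ : ∀ z, 0 < margZ q z := fun z =>
    Finset.sum_pos (fun y _ => Finset.sum_pos (fun s _ => hq _) Finset.univ_nonempty)
      Finset.univ_nonempty
  have hpYZ : ∀ y z, 0 < margYZ p y z := fun y z =>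
    Finset.sum_pos (fun s _ => hp _) Finset.univ_nonempty
  have hqYZ : ∀ y z, 0 < margYZ q y z := fun y z =>
    Finset.sum_pos (fun s _ => hq _) Finset.univ_nonempty
  have hpSZ : ∀ s z, 0 < margSZ p s z := fun s z =>
    Finset.sum_pos (fun y _ => hp _) Finset.univ_nonempty
  have hqSZ : ∀ s z, 0 < margSZ q s z := fun s z =>
    Finset.sum_pos (fun y _ => hq _) Finset.univ_nonempty
  have key : ∀ y s z,
      (p (y, s, z) * margS q s) / (margS p s * q (y, s, z))
        = ((margYZ p y z * margZ q z) / (margZ p z * margYZ q y z))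
          * ((margSZ p s z * margS q s) / (margS p s * margSZ q s z)) := by
    intro y s z
    have hp' : p (y, s, z) = margYZ p y z * margSZ p s z / margZ p z := by
      rw [eq_div_iff (hpZ z).ne']; linarith [hpind y s z]
    have hq' : q (y, s, z) = margYZ q y z * margSZ q s z / margZ q z := by
      rw [eq_div_iff (hqZ z).ne']; linarith [hqind y s z]
    rw [hp', hq']
    field_simp
  have hlog : ∀ y s z,
      p (y, s, z) * Real.log ((p (y, s, z) * margS q s) / (margS p s * q (y, s, z)))
        = p (y, s, z) * Real.log ((margYZ p y z * margZ q z) / (margZ p z * margYZ q y z))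
          + p (y, s, z) * Real.log ((margSZ p s z * margS q s) / (margS p s * margSZ q s z)) := by
    intro y s z
    rw [key y s z, Real.log_mul
        (ne_of_gt (div_pos (mul_pos (hpYZ y z) (hqZ z)) (mul_pos (hpZ z) (hqYZ y z))))
        (ne_of_gt (div_pos (mul_pos (hpSZ s z) (hqS s)) (mul_pos (hpS s) (hqSZ s z)))), mul_add]
  rw [Fintype.sum_prod_type]
  simp only [Fintype.sum_prod_type]
  calc ∑ y, ∑ s, ∑ z, p (y, s, z) *
          Real.log ((p (y, s, z) * margS q s) / (margS p s * q (y, s, z)))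
      = ∑ y, ∑ s, ∑ z,
          (p (y, s, z) * Real.log ((margYZ p y z * margZ q z) / (margZ p z * margYZ q y z))
            + p (y, s, z) * Real.log ((margSZ p s z * margS q s) / (margS p s * margSZ q s z))) := by
        refine Finset.sum_congr rfl fun y _ => Finset.sum_congr rfl fun s _ =>
          Finset.sum_congr rfl fun z _ => hlog y s z
    _ = (∑ y, ∑ s, ∑ z,
          p (y, s, z) * Real.log ((margYZ p y z * margZ q z) / (margZ p z * margYZ q y z)))
        + ∑ y, ∑ s, ∑ z,
          p (y, s, z) * Real.log ((margSZ p s z * margS q s) / (margS p s * margSZ q s z)) := by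
        simp [Finset.sum_add_distrib]
    _ = _ := by
        congr 1
        · refine Finset.sum_congr rfl fun y _ => ?_
          rw [Finset.sum_comm]
          refine Finset.sum_congr rfl fun z _ => ?_
          rw [← Finset.sum_mul]
          rfl
        · rw [Finset.sum_comm]
          refine Finset.sum_congr rfl fun s _ => ?_
          rw [Finset.sum_comm]
          refine Finset.sum_congr rfl fun z _ => ?_
          rw [← Finset.sum_mul]
          rfl
end

section
/- Let p and q be strictly positive joint probability mass functions on the finite product 𝒴 × 𝒮 × 𝒵 satisfying: (i) the group-conditional distributions of Z agree under p and q, i.e. p(y,s,z)/p_{YS}(y,s) = q(y,s,z)/q_{YS}(y,s) for all (y,s,z); and (ii) under both p and q, the label Y and the spurious-attribute label S are conditionally independent given the representation Z, i.e. p(y,s,z)·p_Z(z) = p_{YZ}(y,z)·p_{SZ}(s,z) and q(y,s,z)·q_Z(z) = q_{YZ}(y,z)·q_{SZ}(s,z) for all (y,s,z). Then the conditional Kullback–Leibler divergence of Y given S is bounded below by the conditional Kullback–Leibler divergence of Z given S: Σ_{(y,s)} p_{YS}(y,s)·log( (p_{YS}(y,s)·q_S(s)) / (p_S(s)·q_{YS}(y,s))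 ) ≥ Σ_{(s,z)} p_{SZ}(s,z)·log( (p_{SZ}(s,z)·q_S(s)) / (p_S(s)·q_{SZ}(s,z)) ). -/
/-- Theorem 1 of the paper: under matching group-conditional
distributions of `Z` and conditional independence `Y ⟂ S | Z` under both
`p` and `q`, we have `KL_cond(Y|S) ≥ KL_cond(Z|S)`. -/
theorem condKL_Y_given_S_ge_condKL_Z_given_S
    {𝒴 𝒮 𝒵 : Type*} [Fintype 𝒴] [Fintype 𝒮] [Fintype 𝒵]
    [Nonempty 𝒴] [Nonempty 𝒮] [Nonempty 𝒵]
    (p q : 𝒴 × 𝒮 × 𝒵 → ℝ) (hp : ∀ x, 0 < p x) (hq : ∀ x, 0 < q x)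
    (hpsum : ∑ x : 𝒴 × 𝒮 × 𝒵, p x = 1) (hqsum : ∑ x : 𝒴 × 𝒮 × 𝒵, q x = 1)
    (hcond : ∀ y s z, p (y, s, z) / margYS p y s = q (y, s, z) / margYS q y s)
    (hpind : ∀ y s z, p (y, s, z) * margZ p z = margYZ p y z * margSZ p s z)
    (hqind : ∀ y s z, q (y, s, z) * margZ q z = margYZ q y z * margSZ q s z) :
    ∑ y, ∑ s, margYS p y s *
        Real.log ((margYS p y s * margS q s) / (margS p s * margYS q y s))
      ≥ ∑ s, ∑ z, margSZ p s z *
          Real.log ((margSZ p s z * margS q s) / (margS p s * margSZ q s z)) := by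
  classical
  have hpYS : ∀ y s, 0 < margYS p y s := fun y s =>
    Finset.sum_pos (fun z _ => hp _) Finset.univ_nonempty
  have hqYS : ∀ y s, 0 < margYS q y s := fun y s =>
    Finset.sum_pos (fun z _ => hq _) Finset.univ_nonempty
  have hpSZ : ∀ s z, 0 < margSZ p s z := fun s z =>
    Finset.sum_pos (fun y _ => hp _) Finset.univ_nonempty
  have hqSZ : ∀ s z, 0 < margSZ q s z := fun s z =>
    Finset.sum_pos (fun y _ => hq _) Finset.univ_nonempty
  have hpYZ : ∀ y z, 0 < margYZ p y z := fun y z =>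
    Finset.sum_pos (fun s _ => hp _) Finset.univ_nonempty
  have hqYZ : ∀ y z, 0 < margYZ q y z := fun y z =>
    Finset.sum_pos (fun s _ => hq _) Finset.univ_nonempty
  have hpZ : ∀ z, 0 < margZ p z := fun z =>
    Finset.sum_pos (fun y _ =>
      Finset.sum_pos (fun s _ => hp _) Finset.univ_nonempty) Finset.univ_nonempty
  have hqZ : ∀ z, 0 < margZ q z := fun z =>
    Finset.sum_pos (fun y _ =>
      Finset.sum_pos (fun s _ => hq _) Finset.univ_nonempty) Finset.univ_nonempty
  have hpS : ∀ s, 0 < margS p s := fun s =>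
    Finset.sum_pos (fun y _ =>
      Finset.sum_pos (fun z _ => hp _) Finset.univ_nonempty) Finset.univ_nonempty
  have hqS : ∀ s, 0 < margS q s := fun s =>
    Finset.sum_pos (fun y _ =>
      Finset.sum_pos (fun z _ => hq _) Finset.univ_nonempty) Finset.univ_nonempty
  -- the matching-conditional hypothesis, cross-multiplied
  have hc : ∀ y s z, p (y, s, z) * margYS q y s = q (y, s, z) * margYS p y s :=
    fun y s z => (div_eq_div_iff (hpYS y s).ne' (hqYS y s).ne').mp (hcond y s z)
  -- the key factorization of the pointwise likelihood ratio
  have key : ∀ y s z,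
      (p (y, s, z) * margS q s) / (margS p s * q (y, s, z))
        = ((margSZ p s z * margS q s) / (margS p s * margSZ q s z))
          * ((margYZ p y z * margZ q z) / (margZ p z * margYZ q y z)) := by
    intro y s z
    rw [div_mul_div_comm, div_eq_div_iff (mul_pos (hpS s) (hq _)).ne'
      (mul_pos (mul_pos (hpS s) (hqSZ s z)) (mul_pos (hpZ z) (hqYZ y z))).ne']
    linear_combination margS q s * margS p s *
      (margSZ q s z * margYZ q y z * hpind y s z
        - margSZ p s z * margYZ p y z * hqind y s z)
  -- Step A : the LHS equals the full conditional KL of (Y,Z) given S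
  have stepA : ∀ y s, margYS p y s *
      Real.log ((margYS p y s * margS q s) / (margS p s * margYS q y s))
      = ∑ z, p (y, s, z) *
          Real.log ((p (y, s, z) * margS q s) / (margS p s * q (y, s, z))) := by
    intro y s
    have hlog : ∀ z, Real.log ((p (y, s, z) * margS q s) / (margS p s * q (y, s, z)))
        = Real.log ((margYS p y s * margS q s) / (margS p s * margYS q y s)) := by
      intro z
      congr 1
      rw [div_eq_div_iff (mul_pos (hpS s) (hq _)).ne'
        (mul_pos (hpS s) (hqYS y s)).ne']
      linear_combination margS q s * margS p s * hc y s z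
    simp_rw [hlog]
    exact Finset.sum_mul Finset.univ (fun z => p (y, s, z)) _
  -- total mass identities
  have htot : ∑ y, ∑ s, ∑ z, p (y, s, z) = 1 := by
    rw [← hpsum]; simp only [Fintype.sum_prod_type]
  have hsum1 : ∑ y, ∑ z, margYZ p y z = 1 := by
    rw [← htot]
    exact Finset.sum_congr rfl fun y _ => Finset.sum_comm
  have hsum3 : ∑ z, margZ p z = 1 := by
    rw [← htot]
    calc ∑ z, ∑ y, ∑ s, p (y, s, z)
        = ∑ y, ∑ z, ∑ s, p (y, s, z) := Finset.sum_comm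
      _ = ∑ y, ∑ s, ∑ z, p (y, s, z) :=
          Finset.sum_congr rfl fun y _ => Finset.sum_comm
  have hsum2 : ∑ y, ∑ z, margZ p z * margYZ q y z / margZ q z = 1 := by
    rw [Finset.sum_comm]
    have h : ∀ z, ∑ y, margZ p z * margYZ q y z / margZ q z = margZ p z := by
      intro z
      have h1 : ∑ y, margZ p z * margYZ q y z / margZ q z
          = margZ p z * (∑ y, margYZ q y z) / margZ q z := by
        rw [Finset.mul_sum, Finset.sum_div]
      have h2 : (∑ y, margYZ q y z) = margZ q z := rfl
      rw [h1, h2, mul_div_assoc, div_self (hqZ z).ne', mul_one]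
    simp_rw [h]
    exact hsum3
  -- Step B : chain-rule decomposition
  have main : (∑ y, ∑ s, margYS p y s *
        Real.log ((margYS p y s * margS q s) / (margS p s * margYS q y s)))
      = (∑ s, ∑ z, margSZ p s z *
          Real.log ((margSZ p s z * margS q s) / (margS p s * margSZ q s z)))
        + (∑ y, ∑ z, margYZ p y z *
          Real.log ((margYZ p y z * margZ q z) / (margZ p z * margYZ q y z))) := by
    have split : ∀ y s z, p (y, s, z) *
        Real.log ((p (y, s, z) * margS q s) / (margS p s * q (y, s, z)))
        = p (y, s, z) *
            Real.log ((margSZ p s z * margS q s) / (margS p s * margSZ q s z))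
          + p (y, s, z) *
            Real.log ((margYZ p y z * margZ q z) / (margZ p z * margYZ q y z)) := by
      intro y s z
      rw [key y s z, Real.log_mul
        (div_pos (mul_pos (hpSZ s z) (hqS s)) (mul_pos (hpS s) (hqSZ s z))).ne'
        (div_pos (mul_pos (hpYZ y z) (hqZ z)) (mul_pos (hpZ z) (hqYZ y z))).ne',
        mul_add]
    calc (∑ y, ∑ s, margYS p y s *
          Real.log ((margYS p y s * margS q s) / (margS p s * margYS q y s)))
        = ∑ y, ∑ s, ∑ z,
            (p (y, s, z) *
              Real.log ((margSZ p s z * margS q s) / (margS p s * margSZ q s z))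
            + p (y, s, z) *
              Real.log ((margYZ p y z * margZ q z) / (margZ p z * margYZ q y z))) := by
          refine Finset.sum_congr rfl fun y _ => Finset.sum_congr rfl fun s _ => ?_
          rw [stepA y s]
          exact Finset.sum_congr rfl fun z _ => split y s z
      _ = (∑ y, ∑ s, ∑ z, p (y, s, z) *
              Real.log ((margSZ p s z * margS q s) / (margS p s * margSZ q s z)))
          + (∑ y, ∑ s, ∑ z, p (y, s, z) *
              Real.log ((margYZ p y z * margZ q z) / (margZ p z * margYZ q y z))) := by
          simp [Finset.sum_add_distrib]
      _ = (∑ s, ∑ z, margSZ p s z *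
              Real.log ((margSZ p s z * margS q s) / (margS p s * margSZ q s z)))
          + (∑ y, ∑ z, margYZ p y z *
              Real.log ((margYZ p y z * margZ q z) / (margZ p z * margYZ q y z))) := by
          congr 1
          · calc (∑ y, ∑ s, ∑ z, p (y, s, z) *
                Real.log ((margSZ p s z * margS q s) / (margS p s * margSZ q s z)))
              = ∑ s, ∑ y, ∑ z, p (y, s, z) *
                Real.log ((margSZ p s z * margS q s) / (margS p s * margSZ q s z)) :=
                  Finset.sum_comm
              _ = ∑ s, ∑ z, ∑ y, p (y, s, z) *
                Real.log ((margSZ p s z * margS q s) / (margS p s * margSZ q s z)) :=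
                  Finset.sum_congr rfl fun s _ => Finset.sum_comm
              _ = ∑ s, ∑ z, margSZ p s z *
                Real.log ((margSZ p s z * margS q s) / (margS p s * margSZ q s z)) :=
                  Finset.sum_congr rfl fun s _ => Finset.sum_congr rfl fun z _ =>
                    (Finset.sum_mul Finset.univ (fun y => p (y, s, z)) _).symm
          · refine Finset.sum_congr rfl fun y _ => ?_
            calc (∑ s, ∑ z, p (y, s, z) *
                Real.log ((margYZ p y z * margZ q z) / (margZ p z * margYZ q y z)))
              = ∑ z, ∑ s, p (y, s, z) *
                Real.log ((margYZ p y z * margZ q z) / (margZ p z * margYZ q y z)) :=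
                  Finset.sum_comm
              _ = ∑ z, margYZ p y z *
                Real.log ((margYZ p y z * margZ q z) / (margZ p z * margYZ q y z)) :=
                  Finset.sum_congr rfl fun z _ =>
                    (Finset.sum_mul Finset.univ (fun s => p (y, s, z)) _).symm
  -- nonnegativity of the remainder term (Gibbs' inequality)
  have hge : ∀ y z, margYZ p y z - margZ p z * margYZ q y z / margZ q z
      ≤ margYZ p y z *
        Real.log ((margYZ p y z * margZ q z) / (margZ p z * margYZ q y z)) := by
    intro y z
    set a := margYZ p y z with ha'
    set b := margZ p z * margYZ q y z / margZ q z with hb'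
    have ha : 0 < a := hpYZ y z
    have hbpos : 0 < b := div_pos (mul_pos (hpZ z) (hqYZ y z)) (hqZ z)
    have harg : (margYZ p y z * margZ q z) / (margZ p z * margYZ q y z) = a / b := by
      rw [hb', div_div_eq_mul_div, ha']
    rw [harg]
    have h1 : Real.log (b / a) ≤ b / a - 1 :=
      Real.log_le_sub_one_of_pos (div_pos hbpos ha)
    have h2 : Real.log (a / b) = - Real.log (b / a) := by
      rw [← Real.log_inv, inv_div]
    have h4 : a * Real.log (b / a) ≤ a * (b / a - 1) :=
      mul_le_mul_of_nonneg_left h1 ha.le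
    have h5 : a * (b / a - 1) = b - a := by
      field_simp
    rw [h2, mul_neg]
    linarith
  have hS2 : 0 ≤ ∑ y, ∑ z, margYZ p y z *
      Real.log ((margYZ p y z * margZ q z) / (margZ p z * margYZ q y z)) := by
    have hb : ∑ y, ∑ z, (margYZ p y z - margZ p z * margYZ q y z / margZ q z) = 0 := by
      simp only [Finset.sum_sub_distrib]
      rw [hsum1, hsum2]; ring
    calc (0 : ℝ)
        = ∑ y, ∑ z, (margYZ p y z - margZ p z * margYZ q y z / margZ q z) := hb.symm
      _ ≤ _ := Finset.sum_le_sum fun y _ => Finset.sum_le_sum fun z _ => hge y z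
  rw [ge_iff_le, main]
  exact le_add_of_nonneg_right hS2
end
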